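/- arXiv:1710.02819 — 3 statements merged into one kernel-verified Lean document; each statement's English description precedes it below -/
import Mathlib

section
/- For every positive integer N, the N-th elementary symmetric polynomial equals e_N = Σ_{λ ⊢ N} (-1)^{N - ℓ(λ)} p_λ / z_λ, where the sum runs over all integer partitions λ of N, ℓ(λ) is the number of parts of λ, p_λ = Π_m p_m^{a_m} with a_m the number of parts of λ equal to m, and z_λ = Π_m m^{a_m} a_m!. (This expresses the S-function (1^N), i.e. the Fermi canonical partition function, as a signed sum over integer partitions of products of single-particle partition functions.) -/
open MvPolynomial

/-- The symmetry factor `z_λ = ∏_m m^{a_m} a_m!` of an integer partition `λ`,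
where `a_m` is the number of parts of `λ` equal to `m`. -/
def zPart {N : ℕ} (μ : Nat.Partition N) : ℕ :=
  ∏ m ∈ μ.parts.toFinset, m ^ μ.parts.count m * (μ.parts.count m).factorial

/-!
The right-hand side satisfies Newton's recurrence `N e_N = ∑_{j=1}^N (-1)^(j+1) p_j e_(N-j)`,
which determines `e_N` over a ℚ-algebra. To see this, write `N = ∑_j j a_j(λ)`: this splits
`N p_λ / z_λ` into terms indexed by the parts `j` of `λ`. Removing one part `j` is a bijection
from the partitions of `N` having `j` as a part onto the partitions of `N - j`, under which
`p_λ = p_j p_(λ∖j)` and `z_λ = j a_j(λ) z_(λ∖j)`.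
-/

open Finset

namespace Nat.Partition

variable {N : ℕ}

theorem card_parts_le (μ : N.Partition) : μ.parts.card ≤ N := by
  simpa [μ.parts_sum] using
    Multiset.card_nsmul_le_sum (s := μ.parts) (a := 1) fun _ hx => μ.parts_pos hx

theorem sum_range_mul_count_parts (μ : N.Partition) :
    ∑ j ∈ range (N + 1), j * μ.parts.count j = N := by
  have hsub : μ.parts.toFinset ⊆ range (N + 1) := fun j hj =>
    mem_range.mpr (Nat.lt_succ_of_le (le_of_mem_parts (Multiset.mem_toFinset.mp hj)))
  rw [← sum_subset hsub fun j _ hj => by rw [Multiset.count_eq_zero_of_notMem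
    (Multiset.mem_toFinset.not.mp hj), mul_zero]]
  conv_rhs => rw [← μ.parts_sum, sum_multiset_count]
  exact sum_congr rfl fun j _ => (smul_eq_mul _ _).trans (mul_comm _ _) |>.symm

theorem sum_filter_mem_parts {M : Type*} [AddCommMonoid M] {j : ℕ} (hj : 1 ≤ j) (hjN : j ≤ N)
    (f : N.Partition → M) :
    ∑ μ with j ∈ μ.parts, f μ =
      ∑ ν : (N - j).Partition, f ((partitionWithPartEquiv hj hjN).symm ν) := by
  rw [← sum_subtype_eq_sum_filter, subtype_univ]
  exact Fintype.sum_equiv (partitionWithPartEquiv hj hjN) _ _ fun μ => by simp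

end Nat.Partition

theorem zPart_of_parts_eq_cons {N i j : ℕ} {μ : N.Partition} {ν : i.Partition}
    (h : μ.parts = j ::ₘ ν.parts) : zPart μ = j * μ.parts.count j * zPart ν := by
  set s := ν.parts
  set t := (j ::ₘ s).toFinset
  have hj : j ∈ t := Multiset.mem_toFinset.mpr (Multiset.mem_cons_self j s)
  have hν : zPart ν = ∏ m ∈ t, m ^ s.count m * (s.count m).factorial :=
    prod_subset (Multiset.toFinset_subset.mpr (Multiset.subset_cons s j)) fun m _ hm => by
      rw [Multiset.count_eq_zero_of_notMem (Multiset.mem_toFinset.not.mp hm)]; simp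
  have hrest : ∏ m ∈ t.erase j, m ^ (j ::ₘ s).count m * ((j ::ₘ s).count m).factorial =
      ∏ m ∈ t.erase j, m ^ s.count m * (s.count m).factorial :=
    prod_congr rfl fun m hm => by rw [Multiset.count_cons_of_ne (ne_of_mem_erase hm)]
  rw [hν, zPart, h, ← mul_prod_erase t _ hj, ← mul_prod_erase t _ hj, hrest,
    Multiset.count_cons_self, pow_succ, Nat.factorial_succ]
  ring

theorem zPart_pos {N : ℕ} (μ : N.Partition) : 0 < zPart μ :=
  prod_pos fun m hm => by
    have := μ.parts_pos (Multiset.mem_toFinset.mp hm)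
    positivity

def signedInvZPart {N : ℕ} (μ : N.Partition) : ℚ :=
  (-1) ^ (N - μ.parts.card) * (zPart μ : ℚ)⁻¹

theorem mul_signedInvZPart_of_parts_eq_cons {N i j : ℕ} {μ : N.Partition} {ν : i.Partition}
    (hj : 0 < j) (h : μ.parts = j ::ₘ ν.parts) :
    (j * μ.parts.count j : ℚ) * signedInvZPart μ = (-1) ^ (j + 1) * signedInvZPart ν := by
  have hN : N = i + j := by
    have := congrArg Multiset.sum h
    rw [μ.parts_sum, Multiset.sum_cons, ν.parts_sum] at this
    omega
  have hcard : μ.parts.card = ν.parts.card + 1 := by rw [h, Multiset.card_cons]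
  have hcount : (μ.parts.count j : ℚ) ≠ 0 := by
    rw [h, Multiset.count_cons_self]; positivity
  have hz : (zPart μ : ℚ) = j * μ.parts.count j * zPart ν := by
    exact_mod_cast zPart_of_parts_eq_cons h
  have hzν : (zPart ν : ℚ) ≠ 0 := by exact_mod_cast (zPart_pos ν).ne'
  obtain ⟨d, hd⟩ : ∃ d, i = ν.parts.card + d := ⟨_, (Nat.add_sub_cancel' ν.card_parts_le).symm⟩
  obtain ⟨k, rfl⟩ : ∃ k, j = k + 1 := ⟨j - 1, by omega⟩
  rw [signedInvZPart, signedInvZPart, hz, show N - μ.parts.card = d + k by omega,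
    show i - ν.parts.card = d by omega]
  field_simp
  ring

theorem psumPart_of_parts_eq_cons (σ : Type*) [Fintype σ] (R : Type*) [CommSemiring R]
    {N i j : ℕ} {μ : N.Partition} {ν : i.Partition} (h : μ.parts = j ::ₘ ν.parts) :
    psumPart σ R μ = psum σ R j * psumPart σ R ν := by
  simp [psumPart, h]

section

variable (σ : Type*) [Fintype σ] (R : Type*) [CommRing R] [Algebra ℚ R]

noncomputable def signedPsumSum (N : ℕ) : MvPolynomial σ R :=
  ∑ μ : N.Partition, signedInvZPart μ • psumPart σ R μ

theorem sum_mul_count_smul_psumPart {N j : ℕ} (hj : 0 < j) (hjN : j ≤ N) :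
    ∑ μ : N.Partition, ((j * μ.parts.count j : ℚ) * signedInvZPart μ) • psumPart σ R μ =
      (-1) ^ (j + 1) * (psum σ R j * signedPsumSum σ R (N - j)) := by
  rw [← sum_filter_of_ne (p := fun μ => j ∈ μ.parts), Nat.Partition.sum_filter_mem_parts hj hjN,
    signedPsumSum, mul_sum, mul_sum]
  · refine sum_congr rfl fun ν _ => ?_
    have h := Nat.Partition.partitionWithPartEquiv_symm_apply_parts hj hjN ν
    rw [mul_signedInvZPart_of_parts_eq_cons hj h, psumPart_of_parts_eq_cons σ R h]
    simp only [Algebra.smul_def, map_mul, map_pow, map_neg, map_one]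
    ring
  · intro μ _ hne
    by_contra hj
    simp [Multiset.count_eq_zero_of_notMem hj] at hne

theorem mul_signedPsumSum_eq_sum (N : ℕ) :
    (N : MvPolynomial σ R) * signedPsumSum σ R N = (-1) ^ (N + 1) *
      ∑ a ∈ antidiagonal N with a.1 < N, (-1) ^ a.1 * signedPsumSum σ R a.1 * psum σ R a.2 := by
  set T := fun j => ∑ μ : N.Partition,
    ((j * μ.parts.count j : ℚ) * signedInvZPart μ) • psumPart σ R μ
  have hLHS : (N : MvPolynomial σ R) * signedPsumSum σ R N = ∑ a ∈ antidiagonal N, T a.2 := by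
    rw [← Nat.sum_antidiagonal_swap]
    simp only [Prod.snd_swap]
    rw [Nat.sum_antidiagonal_eq_sum_range_succ fun j _ => T j]
    simp only [T]
    rw [sum_comm, signedPsumSum, mul_sum]
    refine sum_congr rfl fun μ _ => ?_
    have hN : ∑ j ∈ range (N + 1), (j * μ.parts.count j : ℚ) = N := by
      exact_mod_cast μ.sum_range_mul_count_parts
    rw [← sum_smul, ← sum_mul, hN, mul_smul, Nat.cast_smul_eq_nsmul, nsmul_eq_mul]
  rw [hLHS, mul_sum, ← sum_filter_of_ne (p := fun a => a.1 < N)]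
  · refine sum_congr rfl fun a ha => ?_
    obtain ⟨hsum, hlt⟩ : a.1 + a.2 = N ∧ a.1 < N := by simpa using ha
    simp only [T]
    rw [sum_mul_count_smul_psumPart σ R (by omega) (by omega), show N - a.2 = a.1 by omega, ← hsum]
    have hsign : (-1 : MvPolynomial σ R) ^ (a.1 + a.2 + 1) * (-1) ^ a.1 = (-1) ^ (a.2 + 1) := by
      rw [← pow_add, show a.1 + a.2 + 1 + a.1 = a.2 + 1 + 2 * a.1 by ring, pow_add, pow_mul,
        neg_one_sq, one_pow, mul_one]
    linear_combination (psum σ R a.2 * signedPsumSum σ R a.1) * hsign.symm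
  · intro a ha hne
    have hsum : a.1 + a.2 = N := mem_antidiagonal.mp ha
    by_contra hlt
    simp [T, show a.2 = 0 by omega] at hne

theorem signedPsumSum_zero : signedPsumSum σ R 0 = 1 := by
  simp [signedPsumSum, signedInvZPart, zPart, psumPart]

theorem eq_esymm_of_mul_eq_sum (f : ℕ → MvPolynomial σ R) (h0 : f 0 = 1)
    (h : ∀ k : ℕ, (k : MvPolynomial σ R) * f k = (-1) ^ (k + 1) *
      ∑ a ∈ antidiagonal k with a.1 < k, (-1) ^ a.1 * f a.1 * psum σ R a.2)
    (n : ℕ) : f n = esymm σ R n := by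
  induction n using Nat.strong_induction_on with
  | _ n ih =>
    rcases n.eq_zero_or_pos with rfl | hn
    · rw [h0, esymm_zero]
    have hmul : (n : MvPolynomial σ R) * f n = n * esymm σ R n := by
      rw [h, mul_esymm_eq_sum]
      exact congrArg _ (sum_congr rfl fun a ha => by rw [ih a.1 (mem_filter.mp ha).2])
    have hsmul : (n : ℚ) • f n = (n : ℚ) • esymm σ R n := by
      simpa only [Nat.cast_smul_eq_nsmul, nsmul_eq_mul] using hmul
    exact smul_right_injective _ (Nat.cast_ne_zero.mpr hn.ne') hsmul

end

theorem esymm_eq_sum_signed_psumPart_div_zPart_general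
    (σ : Type*) [Fintype σ]
    (R : Type*) [CommRing R] [Algebra ℚ R] (N : ℕ) :
    esymm σ R N = ∑ μ : Nat.Partition N,
      ((-1 : ℚ) ^ (N - μ.parts.card) * (zPart μ : ℚ)⁻¹) • psumPart σ R μ :=
  (eq_esymm_of_mul_eq_sum σ R _ (signedPsumSum_zero σ R) (mul_signedPsumSum_eq_sum σ R) N).symm

/-- **Signed power-sum expansion of the Fermi canonical partition function.**
`e_N = ∑_{λ ⊢ N} (-1)^{N - ℓ(λ)} p_λ / z_λ`, where `ℓ(λ)` is the number of parts of `λ`,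
`p_λ = ∏_m p_m^{a_m}` and `z_λ = ∏_m m^{a_m} a_m!`. -/
theorem esymm_eq_sum_signed_psumPart_div_zPart
    (σ : Type*) [Fintype σ] [DecidableEq σ]
    (R : Type*) [CommRing R] [Algebra ℚ R] (N : ℕ) (hN : 0 < N) :
    esymm σ R N = ∑ μ : Nat.Partition N,
      ((-1 : ℚ) ^ (N - μ.parts.card) * (zPart μ : ℚ)⁻¹) • psumPart σ R μ :=
  esymm_eq_sum_signed_psumPart_div_zPart_general σ R N
end

section
/- The sum of the monomial symmetric polynomials over the partitions of 4 with all parts at most 3 satisfies m_{(3,1)} + m_{(2,2)} + m_{(2,1,1)} + m_{(1,1,1,1)} = (1/24) p_1^4 + (1/4) p_1^2 p_2 + (1/8) p_2^2 + (1/3) p_1 p_3 - (3/4) p_4. (This is the canonical partition function Z_3(β,4) of an ideal Gentile gas with N = 4 particles and maximum occupation number q = 3, expressed through the single-particle partition functions Z(kβ) = p_k.) -/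
/-!
The four partitions on the left are all partitions of 4 except `(4)`, so the left side is
`h₄ - m₍₄₎ = h₄ - p₄`, where `h₄ = ∑_{λ ⊢ 4} m_λ` is the complete homogeneous symmetric polynomial.
Its power-sum expansion follows from Newton's identity `(n + 1) h_{n+1} = ∑_{a+b=n} p_{a+1} h_b`:
both sides equal `∑_{|t| = n+1} |t| x^t`, since `x_i^{a+1} h_b` contributes the monomial `x^t`
once for each `a < t_i`.
-/

open MvPolynomial

/-- Build an integer partition of `N` from an explicit multiset of parts. -/
def part (N : ℕ) (s : Multiset ℕ)
    (h1 : ∀ i ∈ s, 0 < i := by decide) (h2 : s.sum = N := by decide) :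
    Nat.Partition N :=
  ⟨s, fun hi => h1 _ hi, h2⟩

theorem Multiset.dedup_replicate {α : Type*} [DecidableEq α] {n : ℕ} (hn : n ≠ 0) (a : α) :
    (replicate n a).dedup = {a} := by
  rw [← coe_replicate, coe_dedup, List.replicate_dedup hn]
  rfl

namespace Nat.Partition

theorem ofSym_eq_indiscrete_iff {σ : Type*} [DecidableEq σ] {n : ℕ} (hn : n ≠ 0) (s : Sym σ n) :
    ofSym s = indiscrete n ↔ ∃ i, s = Sym.replicate n i := by
  constructor
  · intro h
    have hparts : s.1.dedup.map s.1.count = {n} := by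
      rw [← indiscrete_parts hn, ← h]
      rfl
    obtain ⟨i, hi⟩ := Multiset.card_eq_one.1 (by simpa using congrArg Multiset.card hparts)
    refine ⟨i, Sym.eq_replicate.2 fun b hb => ?_⟩
    simpa [hi] using Multiset.mem_dedup.2 hb
  · rintro ⟨i, rfl⟩
    ext1
    simp [ofSym, Sym.coe_replicate, Multiset.dedup_replicate hn, indiscrete_parts hn]

theorem univ_four : (Finset.univ : Finset (Partition 4)) =
    {indiscrete 4, part 4 {3, 1}, part 4 {2, 2}, part 4 {2, 1, 1}, part 4 {1, 1, 1, 1}} := by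
  refine (Finset.eq_univ_of_forall fun ⟨parts, hpos, hsum⟩ => ?_).symm
  obtain ⟨l, rfl⟩ := Quot.exists_rep parts
  simp only [Multiset.quot_mk_to_coe'', Multiset.mem_coe, Multiset.sum_coe] at hpos hsum ⊢
  simp only [Finset.mem_insert, Finset.mem_singleton, Partition.ext_iff, part,
    indiscrete_parts four_ne_zero]
  rcases l with _ | ⟨a, _ | ⟨b, _ | ⟨c, _ | ⟨d, _ | ⟨e, l⟩⟩⟩⟩⟩ <;>
    simp only [List.mem_cons, forall_eq_or_imp, List.sum_cons, List.sum_nil] at hpos hsum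
  · omega
  · obtain rfl : a = 4 := by omega
    decide
  · obtain ⟨rfl, rfl⟩ | ⟨rfl, rfl⟩ | ⟨rfl, rfl⟩ :
        a = 1 ∧ b = 3 ∨ a = 2 ∧ b = 2 ∨ a = 3 ∧ b = 1 := by
      omega
    all_goals decide
  · obtain ⟨rfl, rfl, rfl⟩ | ⟨rfl, rfl, rfl⟩ | ⟨rfl, rfl, rfl⟩ :
        a = 2 ∧ b = 1 ∧ c = 1 ∨ a = 1 ∧ b = 2 ∧ c = 1 ∨ a = 1 ∧ b = 1 ∧ c = 2 := by
      omega
    all_goals decide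
  · obtain ⟨rfl, rfl, rfl, rfl⟩ : a = 1 ∧ b = 1 ∧ c = 1 ∧ d = 1 := by omega
    decide
  · have := l.sum.zero_le
    omega

end Nat.Partition

namespace MvPolynomial

open Finset

section CommSemiring

variable (σ R : Type*) [Fintype σ] [DecidableEq σ] [CommSemiring R]

theorem hsymm_eq_sum_msymm (n : ℕ) : hsymm σ R n = ∑ μ : n.Partition, msymm σ R μ :=
  (Fintype.sum_fiberwise (fun s : Sym σ n => Nat.Partition.ofSym s) fun s => (s.1.map X).prod).symm

theorem msymm_indiscrete {n : ℕ} (hn : n ≠ 0) : msymm σ R (.indiscrete n) = psum σ R n := by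
  symm
  refine Fintype.sum_bijective
    (fun i => ⟨Sym.replicate n i, (Nat.Partition.ofSym_eq_indiscrete_iff hn _).2 ⟨i, rfl⟩⟩)
    ⟨fun i j h => ?_, fun s => ?_⟩ _ _ fun i => ?_
  · exact Sym.replicate_right_injective hn (congrArg Subtype.val h)
  · obtain ⟨s, hs⟩ := s
    obtain ⟨i, rfl⟩ := (Nat.Partition.ofSym_eq_indiscrete_iff hn s).1 hs
    exact ⟨i, rfl⟩
  · simp [Sym.replicate]

variable {σ R}

theorem sum_count_mul_prod_X_succ (i : σ) (n : ℕ) :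
    ∑ t : Sym σ (n + 1), (t.1.count i : MvPolynomial σ R) * (t.1.map X).prod =
      X i * (hsymm σ R n + ∑ s : Sym σ n, (s.1.count i : MvPolynomial σ R) * (s.1.map X).prod) := by
  symm
  rw [hsymm, ← sum_add_distrib, mul_sum]
  refine Fintype.sum_of_injective (i ::ₛ ·) (fun s s' h => (Sym.cons_inj_right i s s').1 h) _ _
    (fun t ht => ?_) fun s => ?_
  · have hi : i ∉ t := fun hi => ht ⟨t.erase i hi, Sym.cons_erase hi⟩
    rw [Multiset.count_eq_zero_of_notMem hi, Nat.cast_zero, zero_mul]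
  · simp only [Sym.val_eq_coe, Sym.coe_cons, Multiset.count_cons_self, Nat.cast_add, Nat.cast_one,
      Multiset.map_cons, Multiset.prod_cons]
    ring

theorem sum_count_mul_prod_X_eq_sum_antidiagonal (i : σ) (n : ℕ) :
    ∑ t : Sym σ (n + 1), (t.1.count i : MvPolynomial σ R) * (t.1.map X).prod =
      ∑ p ∈ antidiagonal n, X i ^ (p.1 + 1) * hsymm σ R p.2 := by
  induction n with
  | zero =>
    rw [sum_count_mul_prod_X_succ]
    simp [Sym.eq_nil_of_card_zero]
  | succ n ih =>
    rw [sum_count_mul_prod_X_succ, ih, Nat.sum_antidiagonal_succ, zero_add, pow_one, mul_add,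
      mul_sum]
    congr 1
    exact sum_congr rfl fun p _ => by ring

theorem succ_mul_hsymm_succ_eq_sum (n : ℕ) :
    (n + 1) * hsymm σ R (n + 1) =
      ∑ p ∈ antidiagonal n, psum σ R (p.1 + 1) * hsymm σ R p.2 := by
  have hcard (t : Sym σ (n + 1)) : ((n + 1 : ℕ) : MvPolynomial σ R) * (t.1.map X).prod =
      ∑ i, (t.1.count i : MvPolynomial σ R) * (t.1.map X).prod := by
    rw [← sum_mul, ← Nat.cast_sum, Multiset.sum_count_eq_card fun a _ => mem_univ a, t.2]
  calc (n + 1) * hsymm σ R (n + 1)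
      = ∑ t : Sym σ (n + 1), ∑ i, (t.1.count i : MvPolynomial σ R) * (t.1.map X).prod := by
        rw [hsymm, mul_sum]
        exact sum_congr rfl fun t _ => by exact_mod_cast hcard t
    _ = ∑ i, ∑ p ∈ antidiagonal n, X i ^ (p.1 + 1) * hsymm σ R p.2 := by
        rw [sum_comm]
        exact sum_congr rfl fun i _ => sum_count_mul_prod_X_eq_sum_antidiagonal i n
    _ = ∑ p ∈ antidiagonal n, psum σ R (p.1 + 1) * hsymm σ R p.2 := by
        rw [sum_comm]
        simp only [psum, sum_mul]

end CommSemiring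

theorem twentyFour_mul_hsymm_four (σ R : Type*) [Fintype σ] [DecidableEq σ] [CommRing R] :
    (24 : MvPolynomial σ R) * hsymm σ R 4 =
      psum σ R 1 ^ 4 + 6 * (psum σ R 1 ^ 2 * psum σ R 2) + 3 * psum σ R 2 ^ 2 +
        8 * (psum σ R 1 * psum σ R 3) + 6 * psum σ R 4 := by
  have h1 := succ_mul_hsymm_succ_eq_sum (σ := σ) (R := R) 0
  have h2 := succ_mul_hsymm_succ_eq_sum (σ := σ) (R := R) 1
  have h3 := succ_mul_hsymm_succ_eq_sum (σ := σ) (R := R) 2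
  have h4 := succ_mul_hsymm_succ_eq_sum (σ := σ) (R := R) 3
  simp only [Nat.sum_antidiagonal_succ, Nat.antidiagonal_zero, sum_singleton, hsymm_zero]
    at h1 h2 h3 h4
  linear_combination 6 * h4 + 2 * psum σ R 1 * h3 + (psum σ R 1 ^ 2 + 3 * psum σ R 2) * h2 +
    (psum σ R 1 ^ 3 + 5 * psum σ R 1 * psum σ R 2 + 6 * psum σ R 3) * h1

end MvPolynomial

/-- Canonical partition function Z_3(β,4): ideal Gentile gas, N = 4 particles, maximum occupation number q = 3, expressed through the power sums
`p_k = Z(kβ)`: sum of monomial symmetric polynomials over the partitions listed. -/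
theorem gentile_stmt_9 (σ : Type*) [Fintype σ] [DecidableEq σ]
    (R : Type*) [CommRing R] [Algebra ℚ R] :
    msymm σ R (part 4 {3,1}) + msymm σ R (part 4 {2,2}) + msymm σ R (part 4 {2,1,1}) + msymm σ R (part 4 {1,1,1,1}) =
      (1/24 : ℚ) • psum σ R 1 ^ 4 + (1/4 : ℚ) • (psum σ R 1 ^ 2 * psum σ R 2) + (1/8 : ℚ) • psum σ R 2 ^ 2 + (1/3 : ℚ) • (psum σ R 1 * psum σ R 3) - (3/4 : ℚ) • psum σ R 4 := by
  have hsplit : msymm σ R (part 4 {3,1}) + msymm σ R (part 4 {2,2}) +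
      msymm σ R (part 4 {2,1,1}) + msymm σ R (part 4 {1,1,1,1}) = hsymm σ R 4 - psum σ R 4 := by
    rw [hsymm_eq_sum_msymm, Nat.Partition.univ_four, Finset.sum_insert (by decide),
      Finset.sum_insert (by decide), Finset.sum_insert (by decide), Finset.sum_pair (by decide),
      msymm_indiscrete σ R four_ne_zero]
    ring
  have h24 := twentyFour_mul_hsymm_four σ R
  simp only [← Nat.ofNat_nsmul_eq_mul] at h24
  rw [hsplit]
  linear_combination (norm := module) (1/24 : ℚ) • h24
end

section
/- The sum of the monomial symmetric polynomials over the partitions of 5 with all parts at most 2 satisfies m_{(2,2,1)} + m_{(2,1,1,1)} + m_{(1,1,1,1,1)} = (1/120) p_1^5 + (1/12) p_1^3 p_2 + (1/8) p_1 p_2^2 - (1/3) p_1^2 p_3 - (1/3) p_2 p_3 + (1/4) p_1 p_4 + (1/5) p_5. (This is the canonical partition function Z_2(β,5) of an ideal Gentile gas with N = 5 particles and maximum occupation number q = 2, expressed through the single-particle partition functions Z(kβ) = p_k.) -/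
/-!
Expanding `∏ᵢ (1 + xᵢ t + ⋯ + (xᵢ t)^q)`, the coefficient of `tⁿ` is the sum of the monomials
`∏ᵢ xᵢ^cᵢ` with `∑ cᵢ = n` and all `cᵢ ≤ q`; grouping them by the partition formed by the nonzero
`cᵢ` shows that it is `∑ m_λ` over the partitions `λ ⊢ n` with parts at most `q` (the canonical
partition function of the Gentile gas is a coefficient of the grand canonical one). For `q = 2`,
adjoining a variable `x` multiplies the product by `1 + x t + x² t²`, so by induction on the set of
variables the coefficients of `t⁰, …, t⁵` are explicit polynomials in the power sums; the coefficient
of `t⁵` gives the formula, after checking that `(2,2,1)`, `(2,1,1,1)`, `(1,1,1,1,1)` are the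
partitions of `5` with parts at most `2`.
-/

open MvPolynomial

open Finset

theorem Multiset.eq_replicate_add_replicate_of_forall_eq_or_eq {α : Type*} [DecidableEq α]
    {m : Multiset α} {a b : α} (hab : a ≠ b) (h : ∀ x ∈ m, x = a ∨ x = b) :
    m = replicate (m.count a) a + replicate (m.count b) b := by
  have hb : m.filter (· ≠ a) = m.filter (· = b) :=
    filter_congr fun x hx => by rcases h x hx with rfl | rfl <;> simp [hab, hab.symm]
  rw [← filter_eq', ← filter_eq', ← hb, filter_add_not]

theorem Multiset.prod_map_eq_prod_pow_count {ι M : Type*} [Fintype ι] [DecidableEq ι]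
    [CommMonoid M] (s : Multiset ι) (f : ι → M) : (s.map f).prod = ∏ i, f i ^ s.count i := by
  rw [Finset.prod_multiset_map_count]
  exact prod_subset (subset_univ _) fun i _ hi => by simp_all

namespace Nat.Partition

theorem restricted_five_le_two :
    restricted 5 (· ≤ 2) = {part 5 {2,2,1}, part 5 {2,1,1,1}, part 5 {1,1,1,1,1}} := by
  ext μ
  simp only [restricted, mem_filter, mem_univ, true_and, mem_insert, mem_singleton]
  constructor
  · intro hle
    have hμ := Multiset.eq_replicate_add_replicate_of_forall_eq_or_eq (by decide : 2 ≠ 1)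
      fun i hi => by have := μ.parts_pos hi; have := hle i hi; omega
    have hsum := μ.parts_sum
    rw [hμ] at hsum
    simp only [Multiset.sum_add, Multiset.sum_replicate, smul_eq_mul] at hsum
    obtain ⟨h2, h1⟩ | ⟨h2, h1⟩ | ⟨h2, h1⟩ :
        μ.parts.count 2 = 2 ∧ μ.parts.count 1 = 1 ∨ μ.parts.count 2 = 1 ∧ μ.parts.count 1 = 3 ∨
          μ.parts.count 2 = 0 ∧ μ.parts.count 1 = 5 := by omega
    all_goals rw [h2, h1] at hμ
    · exact Or.inl (Nat.Partition.ext (hμ.trans (by decide)))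
    · exact Or.inr (Or.inl (Nat.Partition.ext (hμ.trans (by decide))))
    · exact Or.inr (Or.inr (Nat.Partition.ext (hμ.trans (by decide))))
  · rintro (rfl | rfl | rfl) <;> decide

theorem forall_mem_ofSym_parts_le_iff {σ : Type*} [DecidableEq σ] {n q : ℕ} (s : Sym σ n) :
    (∀ i ∈ (ofSym s).parts, i ≤ q) ↔ ∀ a, (s : Multiset σ).count a ≤ q := by
  simp only [ofSym, Multiset.mem_map, Multiset.mem_dedup, forall_exists_index, and_imp,
    forall_apply_eq_imp_iff₂]
  refine ⟨fun h a => ?_, fun h a _ => h a⟩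
  by_cases ha : a ∈ (s : Multiset σ)
  · exact h a ha
  · simp [Multiset.count_eq_zero_of_notMem ha]

end Nat.Partition

section Sym

variable {σ : Type*} [Fintype σ] [DecidableEq σ]

theorem Sym.count_equivNatSumOfFintype_symm_apply {n : ℕ} (P : {P : σ → ℕ // ∑ i, P i = n})
    (a : σ) : ((Sym.equivNatSumOfFintype σ n).symm P : Multiset σ).count a = (P : σ → ℕ) a := by
  rw [← coe_equivNatSumOfFintype_apply_apply, Equiv.apply_symm_apply]

theorem Sym.sum_filter_count_le_eq_sum_piFinset {M : Type*} [AddCommMonoid M] (n q : ℕ)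
    (f : (σ → ℕ) → M) :
    ∑ s ∈ univ.filter (fun s : Sym σ n => ∀ a, (s : Multiset σ).count a ≤ q),
        f (fun a => (s : Multiset σ).count a) =
      ∑ c ∈ Fintype.piFinset (fun _ : σ => range (q + 1)) with ∑ a, c a = n, f c := by
  refine sum_bij' (fun s _ => Sym.equivNatSumOfFintype σ n s)
    (fun c hc => (Sym.equivNatSumOfFintype σ n).symm ⟨c, (mem_filter.1 hc).2⟩) ?_ ?_ ?_ ?_ ?_
  · intro s hs
    simp_all
  · intro c hc
    rw [mem_filter, Fintype.mem_piFinset] at hc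
    refine mem_filter.2 ⟨mem_univ _, fun a => ?_⟩
    rw [Sym.count_equivNatSumOfFintype_symm_apply]
    exact Nat.lt_succ_iff.1 (mem_range.1 (hc.1 a))
  · intro s _; simp
  · intro c _; simp
  · intro s _; rfl

theorem MvPolynomial.sum_msymm_eq_sum_sym (R : Type*) [CommSemiring R] {n : ℕ}
    (t : Finset n.Partition) :
    ∑ μ ∈ t, msymm σ R μ =
      ∑ s ∈ univ.filter (fun s : Sym σ n => Nat.Partition.ofSym s ∈ t),
        ((s : Multiset σ).map X).prod := by
  rw [← sum_fiberwise_eq_sum_filter]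
  exact sum_congr rfl fun μ _ =>
    (sum_subtype _ (by simp) (fun s : Sym σ n => ((s : Multiset σ).map X).prod)).symm

end Sym

def powerSum {ι A : Type*} [CommSemiring A] (x : ι → A) (s : Finset ι) (k : ℕ) : A :=
  ∑ i ∈ s, x i ^ k

namespace Polynomial

variable {ι A : Type*}

noncomputable def gentilePoly [CommSemiring A] (q : ℕ) (x : ι → A) (s : Finset ι) : A[X] :=
  ∏ i ∈ s, ∑ j ∈ range (q + 1), (C (x i) * X) ^ j

theorem coeff_gentilePoly_univ [CommSemiring A] [Fintype ι] [DecidableEq ι] (q n : ℕ)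
    (x : ι → A) :
    (gentilePoly q x univ).coeff n =
      ∑ c ∈ Fintype.piFinset (fun _ : ι => range (q + 1)) with ∑ a, c a = n, ∏ a, x a ^ c a := by
  rw [gentilePoly, prod_univ_sum, finsetSum_coeff, sum_filter]
  refine sum_congr rfl fun c _ => ?_
  simp_rw [mul_pow, prod_mul_distrib, prod_pow_eq_pow_sum, ← map_pow, ← map_prod,
    coeff_C_mul_X_pow, eq_comm]

theorem coeff_trinomial_mul [CommSemiring A] (y : A) (p : A[X]) (n : ℕ) :
    ((1 + C y * X + C y ^ 2 * X ^ 2) * p).coeff n =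
      p.coeff n + y * (if 1 ≤ n then p.coeff (n - 1) else 0) +
        y ^ 2 * (if 2 ≤ n then p.coeff (n - 2) else 0) := by
  have : (1 + C y * X + C y ^ 2 * X ^ 2) * p =
      p + C y * (X ^ 1 * p) + C (y ^ 2) * (X ^ 2 * p) := by
    rw [map_pow]; ring
  rw [this, coeff_add, coeff_add, coeff_C_mul, coeff_C_mul, coeff_X_pow_mul', coeff_X_pow_mul']

theorem coeff_gentilePoly_two [CommRing A] [DecidableEq ι] (x : ι → A) (s : Finset ι) :
    let G := gentilePoly 2 x s
    let p := powerSum x s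
    G.coeff 0 = 1 ∧ G.coeff 1 = p 1 ∧ 2 * G.coeff 2 = p 1 ^ 2 + p 2 ∧
    6 * G.coeff 3 = p 1 ^ 3 + 3 * p 1 * p 2 - 4 * p 3 ∧
    24 * G.coeff 4 = p 1 ^ 4 + 6 * p 1 ^ 2 * p 2 + 3 * p 2 ^ 2 - 16 * p 1 * p 3 + 6 * p 4 ∧
    120 * G.coeff 5 = p 1 ^ 5 + 10 * p 1 ^ 3 * p 2 + 15 * p 1 * p 2 ^ 2 - 40 * p 1 ^ 2 * p 3
      - 40 * p 2 * p 3 + 30 * p 1 * p 4 + 24 * p 5 := by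
  induction s using Finset.induction with
  | empty => simp [gentilePoly, powerSum, coeff_one]
  | @insert a s ha ih =>
    obtain ⟨h0, h1, h2, h3, h4, h5⟩ := ih
    have hG : gentilePoly 2 x (insert a s) =
        (1 + C (x a) * X + C (x a) ^ 2 * X ^ 2) * gentilePoly 2 x s := by
      rw [gentilePoly, prod_insert ha, ← gentilePoly]
      simp only [sum_range_succ, sum_range_zero, mul_pow]
      ring
    have hp : ∀ k, powerSum x (insert a s) k = x a ^ k + powerSum x s k :=
      fun k => sum_insert ha
    simp only [hG, coeff_trinomial_mul, hp, nonpos_iff_eq_zero, one_ne_zero, ↓reduceIte, mul_zero, add_zero,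
      OfNat.ofNat_ne_zero, le_refl, tsub_self, Nat.not_ofNat_le_one, pow_one, Nat.one_le_ofNat,
      Nat.add_one_sub_one, Nat.reduceLeDiff, Nat.reduceSub]
    refine ⟨h0, ?_, ?_, ?_, ?_, ?_⟩
    · linear_combination h1 + x a * h0
    · linear_combination h2 + 2 * x a * h1 + 2 * x a ^ 2 * h0
    · linear_combination h3 + 3 * x a * h2 + 6 * x a ^ 2 * h1
    · linear_combination h4 + 4 * x a * h3 + 12 * x a ^ 2 * h2
    · linear_combination h5 + 5 * x a * h4 + 20 * x a ^ 2 * h3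

end Polynomial

theorem MvPolynomial.powerSum_X_univ (σ R : Type*) [Fintype σ] [CommSemiring R] (k : ℕ) :
    powerSum (X : σ → MvPolynomial σ R) univ k = psum σ R k :=
  rfl

theorem MvPolynomial.sum_msymm_restricted_le_eq_coeff_gentilePoly (σ R : Type*) [Fintype σ]
    [DecidableEq σ] [CommSemiring R] (q n : ℕ) :
    ∑ μ ∈ Nat.Partition.restricted n (· ≤ q), msymm σ R μ =
      (Polynomial.gentilePoly q (X : σ → MvPolynomial σ R) univ).coeff n := by
  rw [sum_msymm_eq_sum_sym, Polynomial.coeff_gentilePoly_univ,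
    ← Sym.sum_filter_count_le_eq_sum_piFinset]
  refine sum_congr (filter_congr fun s _ => ?_) fun s _ =>
    Multiset.prod_map_eq_prod_pow_count _ _
  rw [Nat.Partition.restricted, mem_filter, Nat.Partition.forall_mem_ofSym_parts_le_iff]
  simp

/-- Canonical partition function Z_2(β,5): ideal Gentile gas, N = 5 particles, maximum occupation number q = 2, expressed through the power sums
`p_k = Z(kβ)`: sum of monomial symmetric polynomials over the partitions listed. -/
theorem gentile_stmt_10 (σ : Type*) [Fintype σ] [DecidableEq σ]
    (R : Type*) [CommRing R] [Algebra ℚ R] :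
    msymm σ R (part 5 {2,2,1}) + msymm σ R (part 5 {2,1,1,1}) + msymm σ R (part 5 {1,1,1,1,1}) =
      (1/120 : ℚ) • psum σ R 1 ^ 5 + (1/12 : ℚ) • (psum σ R 1 ^ 3 * psum σ R 2) + (1/8 : ℚ) • (psum σ R 1 * psum σ R 2 ^ 2) - (1/3 : ℚ) • (psum σ R 1 ^ 2 * psum σ R 3) - (1/3 : ℚ) • (psum σ R 2 * psum σ R 3) + (1/4 : ℚ) • (psum σ R 1 * psum σ R 4) + (1/5 : ℚ) • psum σ R 5 := by
  have hsum : msymm σ R (part 5 {2,2,1}) + msymm σ R (part 5 {2,1,1,1}) +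
      msymm σ R (part 5 {1,1,1,1,1}) =
        ∑ μ ∈ Nat.Partition.restricted 5 (· ≤ 2), msymm σ R μ := by
    rw [Nat.Partition.restricted_five_le_two, sum_insert (by decide), sum_insert (by decide),
      sum_singleton, add_assoc]
  obtain ⟨-, -, -, -, -, hcoeff⟩ :=
    Polynomial.coeff_gentilePoly_two (X : σ → MvPolynomial σ R) univ
  simp only [powerSum_X_univ] at hcoeff
  rw [hsum, sum_msymm_restricted_le_eq_coeff_gentilePoly]
  apply smul_right_injective _ (show (120 : ℚ) ≠ 0 by norm_num)
  simp only [smul_add, smul_sub, smul_smul]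
  norm_num only
  simp only [Algebra.smul_def, map_ofNat, map_one]
  linear_combination hcoeff
end
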